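/- arXiv:2410.02059 — 3 statements merged into one kernel-verified Lean document; each statement's English description precedes it below -/
import Mathlib

section
/- Let H be a complex Hilbert space and let W₀, W₁, W₂ be unitary operators on H such that the Wₐ pairwise satisfy Wₐ W_{a+1} = θₐ W_{a+1} Wₐ for scalars θₐ (indices mod 3), and such that each Wₐ commutes with the product P = W₀ W₁ W₂. Then θ₀ = θ₁ = θ₂. -/
/-!
Write `P = W₀ W₁ W₂`. Moving `W₁` across `P` once through the relation with `W₀` and once
through the relation with `W₂` gives `θ₀ • P W₁ = θ₁ • P W₁`, and `P W₁` is invertible, so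
`θ₀ = θ₁`. Since `P` commutes with `W₀`, it equals its cyclic shift `W₁ W₂ W₀`, and the same
argument for the triple `(W₁, W₂, W₀)` gives `θ₁ = θ₂`.
-/

theorem mul_mul_rotate_eq_of_commute {M : Type*} [Semigroup M] {a b c : M}
    (ha : IsLeftRegular a) (h : Commute (a * b * c) a) : b * c * a = a * b * c :=
  ha (by simpa only [mul_assoc] using h.eq)

theorem smul_eq_smul_of_commute_mul_mul {R A : Type*} [Semigroup A] [SMul R A]
    [IsScalarTower R A A] [SMulCommClass R A A] {X Y Z : A} {α β : R}
    (hXY : X * Y = α • (Y * X)) (hYZ : Y * Z = β • (Z * Y)) (hP : Commute (X * Y * Z) Y) :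
    α • (X * Y * Z * Y) = β • (X * Y * Z * Y) :=
  calc α • (X * Y * Z * Y) = α • (Y * X) * (Y * Z) := by
        rw [hP.eq, smul_mul_assoc]; simp only [mul_assoc]
    _ = X * Y * (Y * Z) := by rw [hXY]
    _ = β • (X * Y * Z * Y) := by rw [hYZ, mul_smul_comm]; simp only [mul_assoc]

theorem eq_of_mul_eq_smul_of_commute_mul_mul {K A : Type*} [Field K] [Ring A] [Nontrivial A]
    [Algebra K A] {X Y Z : A} {α β : K}
    (hXY : X * Y = α • (Y * X)) (hYZ : Y * Z = β • (Z * Y)) (hP : Commute (X * Y * Z) Y)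
    (hunit : IsUnit (X * Y * Z * Y)) : α = β :=
  smul_left_injective K hunit.ne_zero (smul_eq_smul_of_commute_mul_mul hXY hYZ hP)

theorem stmt0_general {H : Type*} [NormedAddCommGroup H] [InnerProductSpace ℂ H] [CompleteSpace H]
    [Nontrivial H]
    (W₀ W₁ W₂ : H →L[ℂ] H)
    (hW₀ : W₀ ∈ unitary (H →L[ℂ] H)) (hW₁ : W₁ ∈ unitary (H →L[ℂ] H))
    (hW₂ : W₂ ∈ unitary (H →L[ℂ] H))
    (θ₀ θ₁ θ₂ : ℂ)
    (h01 : W₀ * W₁ = θ₀ • (W₁ * W₀))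
    (h12 : W₁ * W₂ = θ₁ • (W₂ * W₁))
    (h20 : W₂ * W₀ = θ₂ • (W₀ * W₂))
    (hP₀ : Commute (W₀ * W₁ * W₂) W₀)
    (hP₁ : Commute (W₀ * W₁ * W₂) W₁)
    (hP₂ : Commute (W₀ * W₁ * W₂) W₂) :
    θ₀ = θ₁ ∧ θ₁ = θ₂ := by
  have hu₀ : IsUnit W₀ := Unitary.isUnit_coe (U := ⟨W₀, hW₀⟩)
  have hu₁ : IsUnit W₁ := Unitary.isUnit_coe (U := ⟨W₁, hW₁⟩)
  have hu₂ : IsUnit W₂ := Unitary.isUnit_coe (U := ⟨W₂, hW₂⟩)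
  have hrot : W₁ * W₂ * W₀ = W₀ * W₁ * W₂ := mul_mul_rotate_eq_of_commute hu₀.isRegular.left hP₀
  refine ⟨eq_of_mul_eq_smul_of_commute_mul_mul h01 h12 hP₁ ?_,
    eq_of_mul_eq_smul_of_commute_mul_mul h12 h20 (hrot ▸ hP₂) ?_⟩
  · exact ((hu₀.mul hu₁).mul hu₂).mul hu₁
  · exact ((hu₁.mul hu₂).mul hu₀).mul hu₂

/-- Three unitaries pairwise commuting up to scalars, each commuting with their product,
have equal commutation scalars. -/
theorem stmt0 {H : Type*} [NormedAddCommGroup H] [InnerProductSpace ℂ H] [CompleteSpace H]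
    [Nontrivial H]
    (W₀ W₁ W₂ : H →L[ℂ] H)
    (hW₀ : W₀ ∈ unitary (H →L[ℂ] H)) (hW₁ : W₁ ∈ unitary (H →L[ℂ] H))
    (hW₂ : W₂ ∈ unitary (H →L[ℂ] H))
    (θ₀ θ₁ θ₂ : ℂ)
    (hθ₀ : ‖θ₀‖ = 1) (hθ₁ : ‖θ₁‖ = 1) (hθ₂ : ‖θ₂‖ = 1)
    (h01 : W₀ * W₁ = θ₀ • (W₁ * W₀))
    (h12 : W₁ * W₂ = θ₁ • (W₂ * W₁))
    (h20 : W₂ * W₀ = θ₂ • (W₀ * W₂))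
    (hP₀ : Commute (W₀ * W₁ * W₂) W₀)
    (hP₁ : Commute (W₀ * W₁ * W₂) W₁)
    (hP₂ : Commute (W₀ * W₁ * W₂) W₂) :
    θ₀ = θ₁ ∧ θ₁ = θ₂ :=
  stmt0_general W₀ W₁ W₂ hW₀ hW₁ hW₂ θ₀ θ₁ θ₂ h01 h12 h20 hP₀ hP₁ hP₂
end

section
/- Let W₀, W₁, Θ, U₀₁, U₁₂, U₂₀ be unitaries on a complex Hilbert space such that: Θ² = 1; each Wₐ commutes with Θ; W₀W₁ = θ W₁W₀ for a unimodular scalar θ; there is ε ∈ {0,1} with Θ Uₐ Θ = (−1)^ε Uₐ for all three U's; the U's pairwise commute when ε = 0 and pairwise anticommute when ε = 1; W₀² = λ₀ U₂₀⁻¹U₀₁ and W₁² = λ₁ U₀₁⁻¹U₁₂ for unimodular scalars λ₀, λ₁; W₀ U₀₁ W₀⁻¹ = ω U₀₁ and U₀₁ W₁ U₀₁⁻¹ = θ² W₁ for unimodular ω with θ² = ω. Then θ⁸ = 1. -/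
/-!
Conjugating by `W₀` twice shows that `W₀²` commutes with `U₀₁` up to the phase `ω²`. On the other
hand `W₀² = λ₀ U₂₀⁻¹ U₀₁`, and `U₂₀⁻¹` (anti)commutes with `U₀₁` like `U₂₀` does, so the same phase
is `(-1)^ε`. Since `W₀² U₀₁` is unitary, hence nonzero, the two phases agree: `ω² = (-1)^ε`, and
`θ⁸ = ω⁴ = 1`.
-/

section TwistedCommutation

variable {𝕜 A : Type*} [Field 𝕜] [Ring A] [Algebra 𝕜 A]

theorem mul_eq_inv_smul_mul_of_mul_eq_smul {z : 𝕜} (hz : z ≠ 0) {a b : A}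
    (h : a * b = z • (b * a)) : b * a = z⁻¹ • (a * b) := by
  rw [h, inv_smul_smul₀ hz]

theorem mul_mul_eq_smul_of_mul_eq_smul {z w : 𝕜} {a b c : A}
    (ha : a * c = z • (c * a)) (hb : b * c = w • (c * b)) :
    a * b * c = (z * w) • (c * (a * b)) := by
  rw [mul_assoc, hb, mul_smul_comm, ← mul_assoc, ha, smul_mul_assoc, smul_smul, mul_comm w, mul_assoc]

theorem smul_mul_eq_smul_of_mul_eq_smul {z : 𝕜} (r : 𝕜) {a c : A}
    (h : a * c = z • (c * a)) : (r • a) * c = z • (c * (r • a)) := by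
  rw [smul_mul_assoc, h, mul_smul_comm, smul_comm]

theorem mul_star_eq_smul_of_mul_eq_smul [StarMul A] {z : 𝕜} {u b : A} (hu : u ∈ unitary A)
    (h : u * b = z • (b * u)) : b * star u = z • (star u * b) :=
  calc b * star u = star u * (u * b) * star u := by
        rw [← mul_assoc, Unitary.star_mul_self_of_mem hu, one_mul]
    _ = z • (star u * b) := by
        rw [h, mul_smul_comm, smul_mul_assoc, mul_assoc, mul_assoc,
          Unitary.mul_star_self_of_mem hu, mul_one]

theorem eq_of_smul_mem_unitary_eq_smul [StarMul A] [Nontrivial A] {z w : 𝕜} {u : A}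
    (hu : u ∈ unitary A) (h : z • u = w • u) : z = w :=
  smul_left_injective 𝕜 (left_ne_zero_of_mul_eq_one (Unitary.mul_star_self_of_mem hu)) h

end TwistedCommutation

theorem stmt2_general {H : Type*} [NormedAddCommGroup H] [InnerProductSpace ℂ H] [CompleteSpace H]
    [Nontrivial H]
    (W₀ U₀₁ U₂₀ : H →L[ℂ] H)
    (hW₀ : W₀ ∈ unitary (H →L[ℂ] H))
    (hU₀₁ : U₀₁ ∈ unitary (H →L[ℂ] H))
    (hU₂₀ : U₂₀ ∈ unitary (H →L[ℂ] H))
    (θ : ℂ)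
    (ε : ℕ)
    (hU20U01 : U₂₀ * U₀₁ = ((-1 : ℂ) ^ ε) • (U₀₁ * U₂₀))
    (lam₀ : ℂ)
    (hW₀sq : W₀ * W₀ = lam₀ • (star U₂₀ * U₀₁))
    (ω : ℂ)
    (hconj : W₀ * U₀₁ = ω • (U₀₁ * W₀))
    (hθω : θ ^ 2 = ω) :
    θ ^ 8 = 1 := by
  set c : ℂ := (-1 : ℂ) ^ ε
  have hc : c ≠ 0 := pow_ne_zero _ (neg_ne_zero.mpr one_ne_zero)
  have hW₀W₀_conj : W₀ * W₀ * U₀₁ = (ω * ω) • (U₀₁ * (W₀ * W₀)) :=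
    mul_mul_eq_smul_of_mul_eq_smul hconj hconj
  have hU₂₀_star : star U₂₀ * U₀₁ = c⁻¹ • (U₀₁ * star U₂₀) :=
    mul_eq_inv_smul_mul_of_mul_eq_smul hc (mul_star_eq_smul_of_mul_eq_smul hU₂₀ hU20U01)
  have hW₀W₀_parity : W₀ * W₀ * U₀₁ = c⁻¹ • (U₀₁ * (W₀ * W₀)) := by
    have hX := mul_mul_eq_smul_of_mul_eq_smul hU₂₀_star (one_smul ℂ (U₀₁ * U₀₁)).symm
    rw [hW₀sq]
    simpa only [mul_one] using smul_mul_eq_smul_of_mul_eq_smul lam₀ hX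
  have hω : ω * ω = c⁻¹ :=
    eq_of_smul_mem_unitary_eq_smul (mul_mem hU₀₁ (mul_mem hW₀ hW₀))
      (hW₀W₀_conj.symm.trans hW₀W₀_parity)
  calc θ ^ 8 = (ω * ω) ^ 2 := by rw [← hθω]; ring
    _ = 1 := by rw [hω, inv_pow, ← pow_mul, mul_comm, pow_mul, neg_one_sq, one_pow, inv_one]

/-- The eighth-power triviality `θ⁸ = 1` of the exchange phase of fermionic parity fluxes. -/
theorem stmt2 {H : Type*} [NormedAddCommGroup H] [InnerProductSpace ℂ H] [CompleteSpace H]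
    [Nontrivial H]
    (W₀ W₁ Θ U₀₁ U₁₂ U₂₀ : H →L[ℂ] H)
    (hW₀ : W₀ ∈ unitary (H →L[ℂ] H)) (hW₁ : W₁ ∈ unitary (H →L[ℂ] H))
    (hΘ : Θ ∈ unitary (H →L[ℂ] H))
    (hU₀₁ : U₀₁ ∈ unitary (H →L[ℂ] H)) (hU₁₂ : U₁₂ ∈ unitary (H →L[ℂ] H))
    (hU₂₀ : U₂₀ ∈ unitary (H →L[ℂ] H))
    (hΘ2 : Θ * Θ = 1)
    (hΘW₀ : Θ * W₀ = W₀ * Θ) (hΘW₁ : Θ * W₁ = W₁ * Θ)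
    (θ : ℂ) (hθabs : ‖θ‖ = 1)
    (hWW : W₀ * W₁ = θ • (W₁ * W₀))
    (ε : ℕ) (hε : ε = 0 ∨ ε = 1)
    (hΘU₀₁ : Θ * U₀₁ * Θ = ((-1 : ℂ) ^ ε) • U₀₁)
    (hΘU₁₂ : Θ * U₁₂ * Θ = ((-1 : ℂ) ^ ε) • U₁₂)
    (hΘU₂₀ : Θ * U₂₀ * Θ = ((-1 : ℂ) ^ ε) • U₂₀)
    (hU01U12 : U₀₁ * U₁₂ = ((-1 : ℂ) ^ ε) • (U₁₂ * U₀₁))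
    (hU12U20 : U₁₂ * U₂₀ = ((-1 : ℂ) ^ ε) • (U₂₀ * U₁₂))
    (hU20U01 : U₂₀ * U₀₁ = ((-1 : ℂ) ^ ε) • (U₀₁ * U₂₀))
    (lam₀ lam₁ : ℂ) (hlam₀ : ‖lam₀‖ = 1) (hlam₁ : ‖lam₁‖ = 1)
    (hW₀sq : W₀ * W₀ = lam₀ • (star U₂₀ * U₀₁))
    (hW₁sq : W₁ * W₁ = lam₁ • (star U₀₁ * U₁₂))
    (ω : ℂ) (hωabs : ‖ω‖ = 1)
    (hconj : W₀ * U₀₁ = ω • (U₀₁ * W₀))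
    (hconj' : U₀₁ * W₁ = (θ ^ 2) • (W₁ * U₀₁))
    (hθω : θ ^ 2 = ω) :
    θ ^ 8 = 1 :=
  stmt2_general W₀ U₀₁ U₂₀ hW₀ hU₀₁ hU₂₀ θ ε hU20U01 lam₀ hW₀sq ω hconj hθω
end

section
/- Let G be a group and H a complex Hilbert space. Suppose for each g ∈ G we are given a unitary W(g) on H, and for each pair g₁,g₂ a unitary U(g₁,g₂) such that U(g₁,g₂)·U(g₁g₂,g₃) = ω(g₁,g₂,g₃)·(W(g₁)U(g₂,g₃)W(g₁)⁻¹)·U(g₁,g₂g₃) for scalars ω(g₁,g₂,g₃) of modulus 1, and suppose conjugation by W(g₁) of any U(g₂,g₃) again yields an operator of the same 'type' so that the pentagon of reassociations closes. Then ω satisfies the 3-cocycle identity: ω(g₂,g₃,g₄)·ω(g₁,g₂g₃,g₄)·ω(g₁,g₂,g₃) = ω(g₁g₂,g₃,g₄)·ω(g₁,g₂,g₃g₄), provided W(g)U(h,k)W(g)⁻¹ commutes with scalar factors and the assignment g ↦ Ad_{W(g)} is a homomorphism up to conjugation by the U's (i.e. W(g₁)W(g₂) = λ(g₁,g₂)·V(g₁,g₂)W(g₁g₂)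 with V(g₁,g₂) built from U's that intertwine appropriately). -/
/-!
Reassociate `U(g₁,g₂) U(g₁g₂,g₃) U(g₁g₂g₃,g₄)` in the two ways of the pentagon, expanding it with
the defining relation of `ω` until both sides become a scalar multiple of the same product of
units. On one side this takes three applications of the relation, on the other two, together
with `Ad_{W(g₁)} ∘ Ad_{W(g₂)} = Ad_{U(g₁,g₂)} ∘ Ad_{W(g₁g₂)}`, which is what the multiplication
rule `W(g₁)W(g₂) = U(g₁,g₂)W(g₁g₂)` buys. Comparing the scalars gives `δω = 1`.
Here `Ad_u x = u x u⁻¹` is written `toConjAct u • x`.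
-/

open ConjAct

theorem ConjAct.units_smul_mul_self {M : Type*} [Monoid M] (u : Mˣ) (x : M) :
    (toConjAct u • x) * u = u * x := by
  rw [units_smul_def, ofConjAct_toConjAct, mul_assoc, Units.inv_mul, mul_one]

theorem ConjAct.isUnit_units_smul {M : Type*} [Monoid M] (u : Mˣ) {x : M} (hx : IsUnit x) :
    IsUnit (toConjAct u • x) :=
  hx.map (MulDistribMulAction.toMonoidHom M (toConjAct u))

section Pentagon

variable {G k A : Type*} [Group G] [Field k] [Ring A] [Algebra k A]
  {W : G → Aˣ} {U : G → G → Aˣ} {ω : G → G → G → k}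

theorem mul_conjAct_smul_eq_of_mul_eq (hmul : ∀ a b, (W a : A) * W b = U a b * W (a * b))
    (a b : G) (x : A) :
    (U a b : A) * (toConjAct (W (a * b)) • x) =
      (toConjAct (W a) • toConjAct (W b) • x) * U a b := by
  have hW : W a * W b = U a b * W (a * b) := Units.ext (hmul a b)
  rw [smul_smul, ← map_mul, hW, map_mul, mul_smul, units_smul_mul_self]

variable (hrel : ∀ a b d, (U a b : A) * U (a * b) d =
    ω a b d • ((toConjAct (W a) • (U b d : A)) * U a (b * d)))
include hrel

theorem pentagon_left (g₁ g₂ g₃ g₄ : G) :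
    (U g₁ g₂ : A) * U (g₁ * g₂) g₃ * U (g₁ * g₂ * g₃) g₄ =
      (ω g₂ g₃ g₄ * ω g₁ (g₂ * g₃) g₄ * ω g₁ g₂ g₃) •
        ((toConjAct (W g₁) • toConjAct (W g₂) • (U g₃ g₄ : A)) *
          (toConjAct (W g₁) • (U g₂ (g₃ * g₄) : A)) * U g₁ (g₂ * g₃ * g₄)) := by
  calc (U g₁ g₂ : A) * U (g₁ * g₂) g₃ * U (g₁ * g₂ * g₃) g₄
      = ω g₁ g₂ g₃ •
          ((toConjAct (W g₁) • (U g₂ g₃ : A)) * (U g₁ (g₂ * g₃) * U (g₁ * (g₂ * g₃)) g₄)) := by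
        rw [hrel, smul_mul_assoc, mul_assoc, mul_assoc]
    _ = (ω g₁ g₂ g₃ * ω g₁ (g₂ * g₃) g₄) •
          (toConjAct (W g₁) • ((U g₂ g₃ : A) * U (g₂ * g₃) g₄) * U g₁ (g₂ * g₃ * g₄)) := by
        rw [hrel, mul_smul_comm, smul_smul, smul_mul',
          mul_assoc (toConjAct (W g₁) • (U g₂ g₃ : A))]
    _ = _ := by
        rw [hrel, smul_comm, smul_mul', smul_mul_assoc, smul_smul]
        congr 1
        ring

theorem pentagon_right (hmul : ∀ a b, (W a : A) * W b = U a b * W (a * b)) (g₁ g₂ g₃ g₄ : G) :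
    (U g₁ g₂ : A) * U (g₁ * g₂) g₃ * U (g₁ * g₂ * g₃) g₄ =
      (ω (g₁ * g₂) g₃ g₄ * ω g₁ g₂ (g₃ * g₄)) •
        ((toConjAct (W g₁) • toConjAct (W g₂) • (U g₃ g₄ : A)) *
          (toConjAct (W g₁) • (U g₂ (g₃ * g₄) : A)) * U g₁ (g₂ * g₃ * g₄)) := by
  calc (U g₁ g₂ : A) * U (g₁ * g₂) g₃ * U (g₁ * g₂ * g₃) g₄
      = ω (g₁ * g₂) g₃ g₄ • ((U g₁ g₂ : A) * (toConjAct (W (g₁ * g₂)) • (U g₃ g₄ : A)) *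
          U (g₁ * g₂) (g₃ * g₄)) := by
        rw [mul_assoc, hrel, mul_smul_comm, ← mul_assoc]
    _ = ω (g₁ * g₂) g₃ g₄ • ((toConjAct (W g₁) • toConjAct (W g₂) • (U g₃ g₄ : A)) *
          (U g₁ g₂ * U (g₁ * g₂) (g₃ * g₄))) := by
        rw [mul_conjAct_smul_eq_of_mul_eq hmul, mul_assoc]
    _ = _ := by
        rw [hrel, mul_smul_comm, smul_smul, mul_assoc, mul_assoc g₂]

end Pentagon

theorem stmt16_general {G A : Type*} [Group G] [Ring A] [Algebra ℂ A] [Nontrivial A]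
    (W : G → Aˣ) (U : G → G → Aˣ) (ω : G → G → G → ℂ)
    (hmul : ∀ g₁ g₂, (W g₁ : A) * (W g₂ : A) = (U g₁ g₂ : A) * (W (g₁ * g₂) : A))
    (hrel : ∀ g₁ g₂ g₃, (U g₁ g₂ : A) * (U (g₁ * g₂) g₃ : A) =
      ω g₁ g₂ g₃ •
        ((W g₁ : A) * (U g₂ g₃ : A) * ((W g₁)⁻¹ : Aˣ) * (U g₁ (g₂ * g₃) : A))) :
    ∀ g₁ g₂ g₃ g₄ : G,
      ω g₂ g₃ g₄ * ω g₁ (g₂ * g₃) g₄ * ω g₁ g₂ g₃ =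
        ω (g₁ * g₂) g₃ g₄ * ω g₁ g₂ (g₃ * g₄) := by
  intro g₁ g₂ g₃ g₄
  have hrel' : ∀ a b d, (U a b : A) * U (a * b) d =
      ω a b d • ((toConjAct (W a) • (U b d : A)) * U a (b * d)) := by
    simpa only [units_smul_def, ofConjAct_toConjAct] using hrel
  have hunit : IsUnit ((toConjAct (W g₁) • toConjAct (W g₂) • (U g₃ g₄ : A)) *
      (toConjAct (W g₁) • (U g₂ (g₃ * g₄) : A)) * U g₁ (g₂ * g₃ * g₄)) :=
    ((isUnit_units_smul _ (isUnit_units_smul _ (U g₃ g₄).isUnit)).mul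
      (isUnit_units_smul _ (U _ _).isUnit)).mul (U _ _).isUnit
  exact smul_left_injective ℂ hunit.ne_zero <|
    (pentagon_left hrel' g₁ g₂ g₃ g₄).symm.trans (pentagon_right hrel' hmul g₁ g₂ g₃ g₄)

/-- If `W(g₁)W(g₂) = U(g₁,g₂)W(g₁g₂)` and
`U(g₁,g₂)U(g₁g₂,g₃) = ω(g₁,g₂,g₃)·(W(g₁)U(g₂,g₃)W(g₁)⁻¹)·U(g₁,g₂g₃)` for unimodular
scalars `ω`, then `ω` satisfies the 3-cocycle identity. -/
theorem stmt16 {G A : Type*} [Group G] [Ring A] [Algebra ℂ A] [Nontrivial A]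
    (W : G → Aˣ) (U : G → G → Aˣ) (ω : G → G → G → ℂ)
    (hω : ∀ g₁ g₂ g₃, ‖ω g₁ g₂ g₃‖ = 1)
    (hmul : ∀ g₁ g₂, (W g₁ : A) * (W g₂ : A) = (U g₁ g₂ : A) * (W (g₁ * g₂) : A))
    (hrel : ∀ g₁ g₂ g₃, (U g₁ g₂ : A) * (U (g₁ * g₂) g₃ : A) =
      ω g₁ g₂ g₃ •
        ((W g₁ : A) * (U g₂ g₃ : A) * ((W g₁)⁻¹ : Aˣ) * (U g₁ (g₂ * g₃) : A))) :
    ∀ g₁ g₂ g₃ g₄ : G,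
      ω g₂ g₃ g₄ * ω g₁ (g₂ * g₃) g₄ * ω g₁ g₂ g₃ =
        ω (g₁ * g₂) g₃ g₄ * ω g₁ g₂ (g₃ * g₄) :=
  stmt16_general W U ω hmul hrel
end
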